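/- There exists a constant C > 0 such that for all r ∈ (0,1/2], all s ∈ [0,1/2], and all y ≥ -1, we have |log g_r(s/(2r) + iy) - log g_r(s/r + iy)| ≤ C, where g_r(w) = |e^{-3πr} - e^{-2πriw}|. -/

import Mathlib

noncomputable def gr (r x y : ℝ) : ℝ :=
  ‖(Complex.exp (-(3:ℂ) * Real.pi * r) -
    Complex.exp (-(2:ℂ) * Real.pi * r * Complex.I * ((x : ℂ) + (y : ℂ) * Complex.I)))‖

lemma abs_sub_exp_sq (a b θ : ℝ) :
    (‖(a:ℂ) - (b:ℂ) * Complex.exp ((θ:ℂ) * Complex.I)‖)^2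
      = a^2 - 2*a*b*Real.cos θ + b^2 := by
  rw [← Complex.normSq_eq_norm_sq, Complex.normSq_apply]
  simp [Complex.exp_mul_I, Complex.cos_ofReal_re, Complex.sin_ofReal_re]
  nlinarith [Real.sin_sq_add_cos_sq θ]

lemma gr_sq (r x y : ℝ) :
    (gr r x y)^2 = Real.exp (-(3*Real.pi*r))^2
      - 2 * Real.exp (-(3*Real.pi*r)) * Real.exp (2*Real.pi*r*y) * Real.cos (2*Real.pi*r*x)
      + Real.exp (2*Real.pi*r*y)^2 := by
  have h1 : Complex.exp (-(3:ℂ) * Real.pi * r) = ((Real.exp (-(3*Real.pi*r)) : ℝ) : ℂ) := by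
    rw [Complex.ofReal_exp]; push_cast; ring_nf
  have h2 : -(2:ℂ) * Real.pi * r * Complex.I * ((x : ℂ) + (y : ℂ) * Complex.I)
      = ((2*Real.pi*r*y : ℝ) : ℂ) + ((-(2*Real.pi*r*x) : ℝ) : ℂ) * Complex.I := by
    push_cast
    apply Complex.ext <;> simp <;> try ring
  unfold gr
  rw [h1, h2, Complex.exp_add, ← Complex.ofReal_exp, abs_sub_exp_sq, Real.cos_neg]

theorem stmt3 :
    ∃ C : ℝ, 0 < C ∧
      ∀ r ∈ Set.Ioc (0 : ℝ) (1/2), ∀ s ∈ Set.Icc (0 : ℝ) (1/2), ∀ y : ℝ, -1 ≤ y →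
        |Real.log (gr r (s/(2*r)) y) - Real.log (gr r (s/r) y)| ≤ C := by
  refine ⟨1, one_pos, ?_⟩
  intro r hr s hs y hy
  have hπ : 0 < Real.pi := Real.pi_pos
  have hr0 : (0:ℝ) < r := hr.1
  have hrne : r ≠ 0 := ne_of_gt hr0
  obtain ⟨A, hAdef⟩ : ∃ t, Real.exp (-(3*Real.pi*r)) = t := ⟨_, rfl⟩
  obtain ⟨B, hBdef⟩ : ∃ t, Real.exp (2*Real.pi*r*y) = t := ⟨_, rfl⟩
  obtain ⟨N, hNdef⟩ : ∃ t, gr r (s/r) y = t := ⟨_, rfl⟩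
  obtain ⟨D, hDdef⟩ : ∃ t, gr r (s/(2*r)) y = t := ⟨_, rfl⟩
  obtain ⟨c1, hc1def⟩ : ∃ t, Real.cos (2*Real.pi*s) = t := ⟨_, rfl⟩
  obtain ⟨c2, hc2def⟩ : ∃ t, Real.cos (Real.pi*s) = t := ⟨_, rfl⟩
  have hA : 0 < A := hAdef ▸ Real.exp_pos _
  have hB : 0 < B := hBdef ▸ Real.exp_pos _
  have hAB : A < B := by
    rw [← hAdef, ← hBdef]
    apply Real.exp_lt_exp.mpr
    nlinarith [mul_pos hπ hr0]
  have hx1 : 2*Real.pi*r*(s/r) = 2*Real.pi*s := by field_simp; try ring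
  have hx2 : 2*Real.pi*r*(s/(2*r)) = Real.pi*s := by field_simp; try ring
  have hNsq : N^2 = A^2 - 2*A*B*c1 + B^2 := by
    rw [← hNdef, gr_sq, hx1, hAdef, hBdef, hc1def]
  have hDsq : D^2 = A^2 - 2*A*B*c2 + B^2 := by
    rw [← hDdef, gr_sq, hx2, hAdef, hBdef, hc2def]
  have hc2le : c2 ≤ 1 := hc2def ▸ Real.cos_le_one _
  have hc12 : c1 ≤ c2 := by
    rw [← hc1def, ← hc2def]
    apply Real.cos_le_cos_of_nonneg_of_le_pi
    · exact mul_nonneg hπ.le hs.1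
    · nlinarith [hs.2]
    · nlinarith [hs.1]
  have hcdouble : c1 = 2*c2^2 - 1 := by
    rw [← hc1def, ← hc2def, show 2*Real.pi*s = 2*(Real.pi*s) by ring, Real.cos_two_mul]
  have hNnn : 0 ≤ N := by rw [← hNdef]; unfold gr; exact norm_nonneg _
  have hDnn : 0 ≤ D := by rw [← hDdef]; unfold gr; exact norm_nonneg _
  have hDsqpos : 0 < D^2 := by
    nlinarith [mul_pos hA hB, mul_pos (sub_pos.mpr hAB) (sub_pos.mpr hAB)]
  have hDpos : 0 < D := by
    rcases hDnn.lt_or_eq with h | h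
    · exact h
    · exfalso; rw [← h] at hDsqpos; simp at hDsqpos
  have hsqle : D^2 ≤ N^2 := by nlinarith [mul_pos hA hB]
  have hDN : D ≤ N := le_of_pow_le_pow_left₀ two_ne_zero hNnn hsqle
  have hN2D : N ≤ 2*D := by
    have key : N^2 ≤ (2*D)^2 := by
      nlinarith [mul_nonneg (mul_nonneg hA.le hB.le) (sq_nonneg (c2 - 1)), sq_nonneg (A - B)]
    exact le_of_pow_le_pow_left₀ two_ne_zero (by positivity) key
  have hlog : Real.log D ≤ Real.log N := Real.log_le_log hDpos hDN
  have hlog2 : Real.log N ≤ Real.log 2 + Real.log D := by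
    calc Real.log N ≤ Real.log (2*D) := Real.log_le_log (hDpos.trans_le hDN) hN2D
      _ = Real.log 2 + Real.log D := Real.log_mul two_ne_zero hDpos.ne'
  rw [hNdef, hDdef, abs_sub_comm, abs_of_nonneg (by linarith)]
  have : Real.log 2 < 0.6931471808 := Real.log_two_lt_d9
  linarith
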